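/- arXiv:2302.04487 — 2 statements merged into one kernel-verified Lean document; each statement's English description precedes it below -/
import Mathlib

section
/- For every integer n ≥ 3, M(n,2,3,2,2) = C(n,2) − C(⌊n/2⌋, 2), where C(·,·) is the binomial coefficient. -/
open Finset

/-- The `s`-shadow of a hypergraph `H`: all `s`-element vertex sets contained in
some edge of `H`. -/
def hShadow {V : Type*} [DecidableEq V] (s : ℕ) (H : Finset (Finset V)) :
    Finset (Finset V) :=
  H.biUnion fun e => e.powersetCard s

/-- One step of `t`-tight connectivity: both `a` and `b` are edges of `H` and they
share at least `t` vertices. -/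
def TightStep {V : Type*} [DecidableEq V] (t : ℕ) (H : Finset (Finset V))
    (a b : Finset V) : Prop :=
  a ∈ H ∧ b ∈ H ∧ t ≤ (a ∩ b).card

/-- Two edges lie in the same `t`-tight component iff they are joined by a chain of
edges, consecutive ones sharing at least `t` vertices. -/
def TightConn {V : Type*} [DecidableEq V] (t : ℕ) (H : Finset (Finset V)) :
    Finset V → Finset V → Prop :=
  Relation.ReflTransGen (TightStep t H)

open scoped Classical in
/-- The `t`-tight component of the edge `e` in the hypergraph `H`. -/
noncomputable def tightComponent {V : Type*} [DecidableEq V] (t : ℕ)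
    (H : Finset (Finset V)) (e : Finset V) : Finset (Finset V) :=
  H.filter fun f => TightConn t H e f

/-- The `k`-uniform hypergraph `H i` of edges of `K^k_n` having color `i` under the
coloring `c`. -/
def colorClass (n r k : ℕ) (c : Finset (Fin n) → Fin r) (i : Fin r) :
    Finset (Finset (Fin n)) :=
  (Finset.univ.powersetCard k).filter fun e => c e = i

/-- `M(n,r,k,t,s;c)`: the largest number of vertex `s`-sets contained in the edges of
a monochromatic `t`-tight component of the `r`-coloring `c` of `K^k_n`. -/
noncomputable def Mcol (n r k t s : ℕ) (c : Finset (Fin n) → Fin r) : ℕ :=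
  Finset.univ.sup fun i : Fin r =>
    (colorClass n r k c i).sup fun e =>
      (hShadow s (tightComponent t (colorClass n r k c i) e)).card

/-- `M(n,r,k,t,s)`: the minimum of `M(n,r,k,t,s;c)` over all `r`-colorings `c` of
`K^k_n`. -/
noncomputable def Mmin (n r k t s : ℕ) : ℕ :=
  sInf {m | ∃ c : Finset (Fin n) → Fin r, Mcol n r k t s c = m}

----------------------------------------------------------------
-- Auxiliary development
----------------------------------------------------------------

section Aux

open Relation

variable {n : ℕ}

/-- Link adjacency at `u` in color `i`. -/
def LinkAdj (c : Finset (Fin n) → Fin 2) (i : Fin 2) (u x y : Fin n) : Prop :=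
  x ≠ y ∧ x ≠ u ∧ y ≠ u ∧ c {u, x, y} = i

/-- The link of `u` in color `i` is connected and spanning. -/
def ConnAt (c : Finset (Fin n) → Fin 2) (i : Fin 2) (u : Fin n) : Prop :=
  ∀ x y, x ≠ u → y ≠ u → Relation.ReflTransGen (LinkAdj c i u) x y

lemma linkAdj_symm {c : Finset (Fin n) → Fin 2} {i : Fin 2} {u x y : Fin n}
    (h : LinkAdj c i u x y) : LinkAdj c i u y x := by
  obtain ⟨h1, h2, h3, h4⟩ := h
  refine ⟨h1.symm, h3, h2, ?_⟩
  rwa [show ({u, y, x} : Finset (Fin n)) = {u, x, y} by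
    rw [Finset.pair_comm y x]]

lemma mem_colorClass_iff {c : Finset (Fin n) → Fin 2} {i : Fin 2} {e : Finset (Fin n)} :
    e ∈ colorClass n 2 3 c i ↔ e.card = 3 ∧ c e = i := by
  simp [colorClass, Finset.mem_filter, Finset.mem_powersetCard, Finset.subset_univ]

lemma triple_mem {c : Finset (Fin n) → Fin 2} {i : Fin 2} {u x y : Fin n}
    (h : LinkAdj c i u x y) : ({u, x, y} : Finset (Fin n)) ∈ colorClass n 2 3 c i := by
  obtain ⟨hxy, hxu, hyu, hc⟩ := h
  refine mem_colorClass_iff.2 ⟨?_, hc⟩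
  rw [Finset.card_insert_of_notMem (by simp [hxu.symm, hyu.symm]),
    Finset.card_insert_of_notMem (by simp [hxy]), Finset.card_singleton]

lemma pair_subset_inter_card {g g' : Finset (Fin n)} {u b : Fin n}
    (hug : u ∈ g) (hbg : b ∈ g) (hug' : u ∈ g') (hbg' : b ∈ g') (hub : u ≠ b) :
    2 ≤ (g ∩ g').card := by
  have hsub : ({u, b} : Finset (Fin n)) ⊆ g ∩ g' := by
    intro t ht
    rcases Finset.mem_insert.1 ht with rfl | ht
    · exact Finset.mem_inter.2 ⟨hug, hug'⟩
    · rw [Finset.mem_singleton.1 ht]; exact Finset.mem_inter.2 ⟨hbg, hbg'⟩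
  calc 2 = ({u, b} : Finset (Fin n)).card := (Finset.card_pair hub).symm
    _ ≤ _ := Finset.card_le_card hsub

lemma reach {c : Finset (Fin n) → Fin 2} {i : Fin 2} {u : Fin n} {e : Finset (Fin n)}
    (he : e ∈ colorClass n 2 3 c i) (hue : u ∈ e) {a z : Fin n} (hae : a ∈ e) (hau : a ≠ u)
    (h : Relation.ReflTransGen (LinkAdj c i u) a z) :
    ∃ g ∈ colorClass n 2 3 c i, u ∈ g ∧ z ∈ g ∧
      TightConn 2 (colorClass n 2 3 c i) e g := by
  induction h with
  | refl => exact ⟨e, he, hue, hae, Relation.ReflTransGen.refl⟩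
  | @tail b z hab hbz ih =>
    obtain ⟨g, hg, hug, hbg, hconn⟩ := ih
    obtain ⟨hbz', hbu, hzu, hcc⟩ := hbz
    have hg' : ({u, b, z} : Finset (Fin n)) ∈ colorClass n 2 3 c i :=
      triple_mem ⟨hbz', hbu, hzu, hcc⟩
    refine ⟨{u, b, z}, hg', by simp, by simp, hconn.tail ⟨hg, hg', ?_⟩⟩
    exact pair_subset_inter_card hug hbg (by simp) (by simp) hbu.symm

lemma erase_nonempty_elt {e : Finset (Fin n)} (he : e.card = 3) (u : Fin n) :
    ∃ a ∈ e, a ≠ u := by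
  by_cases hue : u ∈ e
  · have : (e.erase u).card = 2 := by rw [Finset.card_erase_of_mem hue, he]
    obtain ⟨a, ha⟩ := Finset.card_pos.1 (by omega : 0 < (e.erase u).card)
    exact ⟨a, Finset.mem_of_mem_erase ha, (Finset.mem_erase.1 ha).1⟩
  · obtain ⟨a, ha⟩ := Finset.card_pos.1 (by omega : 0 < e.card)
    exact ⟨a, ha, fun h => hue (h ▸ ha)⟩

/-- Any two edges of color `i` through a vertex `u` with connected spanning link
are tight-connected. -/
lemma conn_of_mem {c : Finset (Fin n) → Fin 2} {i : Fin 2} {u : Fin n}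
    {e f : Finset (Fin n)} (hc : ConnAt c i u)
    (he : e ∈ colorClass n 2 3 c i) (hf : f ∈ colorClass n 2 3 c i)
    (hue : u ∈ e) (huf : u ∈ f) : TightConn 2 (colorClass n 2 3 c i) e f := by
  obtain ⟨a, hae, hau⟩ := erase_nonempty_elt (mem_colorClass_iff.1 he).1 u
  obtain ⟨b, hbf, hbu⟩ := erase_nonempty_elt (mem_colorClass_iff.1 hf).1 u
  obtain ⟨g, hg, hug, hbg, hconn⟩ := reach he hue hae hau (hc a b hau hbu)
  exact hconn.tail ⟨hg, hf, pair_subset_inter_card hug hbg huf hbf hbu.symm⟩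

lemma exists_third (hn : 3 ≤ n) (a b : Fin n) : ∃ w : Fin n, w ≠ a ∧ w ≠ b := by
  by_contra h
  push_neg at h
  have hsub : (Finset.univ : Finset (Fin n)) ⊆ {a, b} := by
    intro w _
    by_cases hw : w = a
    · simp [hw]
    · simp [h w hw]
  have := Finset.card_le_card hsub
  have h2 : ({a, b} : Finset (Fin n)).card ≤ 2 :=
    le_trans (Finset.card_insert_le _ _) (by simp)
  rw [Finset.card_fin] at this
  omega

lemma exists_linkAdj (hn : 3 ≤ n) {c : Finset (Fin n) → Fin 2} {i : Fin 2} {u y : Fin n}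
    (hc : ConnAt c i u) (hy : y ≠ u) : ∃ z, LinkAdj c i u y z := by
  obtain ⟨w, hwy, hwu⟩ := exists_third hn y u
  rcases (hc y w hy hwu).cases_head with h | ⟨z, hz, _⟩
  · exact absurd h.symm hwy
  · exact ⟨z, hz⟩

lemma pair_covered (hn : 3 ≤ n) {c : Finset (Fin n) → Fin 2} {i : Fin 2} {u x y : Fin n}
    {e : Finset (Fin n)} (hu : ConnAt c i u) (hx : ConnAt c i x) (hyx : y ≠ x)
    (he : e ∈ colorClass n 2 3 c i) (hue : u ∈ e) :
    ∃ f ∈ colorClass n 2 3 c i, x ∈ f ∧ y ∈ f ∧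
      TightConn 2 (colorClass n 2 3 c i) e f := by
  obtain ⟨z, hz⟩ := exists_linkAdj hn hx hyx
  have hf := triple_mem hz
  have hxf : x ∈ ({x, y, z} : Finset (Fin n)) := by simp
  have hyf : y ∈ ({x, y, z} : Finset (Fin n)) := by simp
  refine ⟨{x, y, z}, hf, hxf, hyf, ?_⟩
  by_cases hux : u = x
  · subst hux
    exact conn_of_mem hu he hf hue hxf
  · obtain ⟨z', hz'⟩ := exists_linkAdj hn hu (Ne.symm hux)
    have hg := triple_mem hz'
    exact (conn_of_mem hu he hg hue (by simp)).trans
      (conn_of_mem hx hg hf (by simp) hxf)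

lemma dichotomy (hn : 3 ≤ n) (c : Finset (Fin n) → Fin 2) (u : Fin n) :
    ConnAt c 0 u ∨ ConnAt c 1 u := by
  by_contra h
  push_neg at h
  obtain ⟨h0, h1⟩ := h
  unfold ConnAt at h0 h1
  push_neg at h0 h1
  obtain ⟨x, y, hxu, hyu, hxy⟩ := h0
  obtain ⟨p, q, hpu, hqu, hpq⟩ := h1
  have fin2 : ∀ j : Fin 2, j = 0 ∨ j = 1 := by decide
  have bridge : ∀ a b, a ≠ u → b ≠ u → Relation.ReflTransGen (LinkAdj c 0 u) x a →
      ¬ Relation.ReflTransGen (LinkAdj c 0 u) x b → LinkAdj c 1 u a b := by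
    intro a b hau hbu hra hrb
    have hab : a ≠ b := by rintro rfl; exact hrb hra
    rcases fin2 (c {u, a, b}) with hcc | hcc
    · exact absurd (hra.tail ⟨hab, hau, hbu, hcc⟩) hrb
    · exact ⟨hab, hau, hbu, hcc⟩
  apply hpq
  by_cases hp : Relation.ReflTransGen (LinkAdj c 0 u) x p
  · by_cases hq : Relation.ReflTransGen (LinkAdj c 0 u) x q
    · exact (Relation.ReflTransGen.single (bridge p y hpu hyu hp hxy)).tail
        (linkAdj_symm (bridge q y hqu hyu hq hxy))
    · exact Relation.ReflTransGen.single (bridge p q hpu hqu hp hq)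
  · by_cases hq : Relation.ReflTransGen (LinkAdj c 0 u) x q
    · exact Relation.ReflTransGen.single (linkAdj_symm (bridge q p hqu hpu hq hp))
    · exact (Relation.ReflTransGen.single
        (linkAdj_symm (bridge x p hxu hpu Relation.ReflTransGen.refl hp))).tail
        (bridge x q hxu hqu Relation.ReflTransGen.refl hq)

open scoped Classical in
lemma lower_bound (hn : 3 ≤ n) (c : Finset (Fin n) → Fin 2) :
    n.choose 2 - (n / 2).choose 2 ≤ Mcol n 2 3 2 2 c := by
  classical
  obtain ⟨i, hi⟩ : ∃ i : Fin 2, n ≤ 2 * (Finset.univ.filter (ConnAt c i)).card := by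
    by_contra h
    push_neg at h
    have h0 := h 0
    have h1 := h 1
    have hcover : (Finset.univ : Finset (Fin n)) ⊆
        Finset.univ.filter (ConnAt c 0) ∪ Finset.univ.filter (ConnAt c 1) := by
      intro v _
      rcases dichotomy hn c v with hv | hv
      · exact Finset.mem_union_left _ (Finset.mem_filter.2 ⟨Finset.mem_univ v, hv⟩)
      · exact Finset.mem_union_right _ (Finset.mem_filter.2 ⟨Finset.mem_univ v, hv⟩)
    have hc1 := Finset.card_le_card hcover
    have hc2 := Finset.card_union_le (Finset.univ.filter (ConnAt c 0))
      (Finset.univ.filter (ConnAt c 1))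
    rw [Finset.card_fin] at hc1
    omega
  have hAconn : ∀ v ∈ Finset.univ.filter (ConnAt c i), ConnAt c i v :=
    fun v hv => (Finset.mem_filter.1 hv).2
  obtain ⟨u, hu⟩ : (Finset.univ.filter (ConnAt c i)).Nonempty := by
    rw [← Finset.card_pos]; omega
  have hcu := hAconn u hu
  obtain ⟨x₀, hx₀u, -⟩ := exists_third hn u u
  obtain ⟨z₀, hz₀⟩ := exists_linkAdj hn hcu hx₀u
  have he₀ : ({u, x₀, z₀} : Finset (Fin n)) ∈ colorClass n 2 3 c i := triple_mem hz₀
  have hue₀ : u ∈ ({u, x₀, z₀} : Finset (Fin n)) := by simp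
  set A := Finset.univ.filter (ConnAt c i) with hA
  set Sh := hShadow 2 (tightComponent 2 (colorClass n 2 3 c i) {u, x₀, z₀}) with hSh
  have hsub : Finset.univ.powersetCard 2 \
      ((Finset.univ \ A).powersetCard 2) ⊆ Sh := by
    intro p hp
    rw [Finset.mem_sdiff, Finset.mem_powersetCard] at hp
    obtain ⟨⟨-, hp2⟩, hnot⟩ := hp
    have hmeet : ∃ v ∈ p, v ∈ A := by
      by_contra hmeet
      push_neg at hmeet
      exact hnot (Finset.mem_powersetCard.2
        ⟨fun v hv => Finset.mem_sdiff.2 ⟨Finset.mem_univ v, hmeet v hv⟩, hp2⟩)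
    obtain ⟨v, hvp, hvA⟩ := hmeet
    obtain ⟨w, hwv, rfl⟩ : ∃ w, w ≠ v ∧ p = {v, w} := by
      obtain ⟨w, hw⟩ := Finset.card_eq_one.1
        (by rw [Finset.card_erase_of_mem hvp, hp2] : (p.erase v).card = 1)
      refine ⟨w, ?_, ?_⟩
      · have : w ∈ p.erase v := hw ▸ Finset.mem_singleton_self w
        exact (Finset.mem_erase.1 this).1
      · rw [← Finset.insert_erase hvp, hw]
    obtain ⟨f, hf, hvf, hwf, hconn⟩ := pair_covered hn hcu (hAconn v hvA) hwv he₀ hue₀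
    refine Finset.mem_biUnion.2 ⟨f, ?_, Finset.mem_powersetCard.2 ⟨?_, hp2⟩⟩
    · rw [tightComponent, Finset.mem_filter]; exact ⟨hf, hconn⟩
    · intro t ht
      rcases Finset.mem_insert.1 ht with rfl | ht
      · exact hvf
      · rw [Finset.mem_singleton.1 ht]; exact hwf
  have hpsub : ((Finset.univ \ A).powersetCard 2) ⊆
      (Finset.univ.powersetCard 2 : Finset (Finset (Fin n))) :=
    Finset.powersetCard_mono (Finset.subset_univ _)
  have hcard1 : (Finset.univ.powersetCard 2 \
      ((Finset.univ \ A).powersetCard 2) : Finset (Finset (Fin n))).card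
      = n.choose 2 - (n - A.card).choose 2 := by
    rw [Finset.card_sdiff_of_subset hpsub, Finset.card_powersetCard, Finset.card_powersetCard,
      Finset.card_fin, Finset.card_sdiff_of_subset (Finset.subset_univ _), Finset.card_fin]
  have hAcard : A.card = (Finset.univ.filter (ConnAt c i)).card := by rw [hA]
  have hhalf : n - A.card ≤ n / 2 := by omega
  have hfinal : n.choose 2 - (n / 2).choose 2 ≤ Sh.card := by
    calc n.choose 2 - (n / 2).choose 2
        ≤ n.choose 2 - (n - A.card).choose 2 :=
          Nat.sub_le_sub_left (Nat.choose_le_choose 2 hhalf) _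
      _ = _ := hcard1.symm
      _ ≤ Sh.card := Finset.card_le_card hsub
  refine le_trans hfinal (le_trans ?_ (Finset.le_sup (Finset.mem_univ i)))
  exact Finset.le_sup (f := fun e =>
    (hShadow 2 (tightComponent 2 (colorClass n 2 3 c i) e)).card) he₀

----------------------------------------------------------------
-- Upper bound: the balanced majority coloring
----------------------------------------------------------------

def goodColoring (n : ℕ) : Finset (Fin n) → Fin 2 := fun e =>
  if 2 ≤ (e.filter (fun v : Fin n => (v : ℕ) < n - n / 2)).card then 0 else 1

lemma card_filter_val_lt {m : ℕ} (h : m ≤ n) :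
    (Finset.univ.filter (fun v : Fin n => (v : ℕ) < m)).card = m := by
  have key : (Finset.univ.filter (fun v : Fin n => (v : ℕ) < m)).card
      = (Finset.range m).card := by
    refine Finset.card_bij (fun v _ => (v : ℕ)) ?_ ?_ ?_
    · intro a ha
      simp only [Finset.mem_filter] at ha
      simpa using ha.2
    · intro a _ b _ hab
      exact Fin.val_injective hab
    · intro b hb
      simp only [Finset.mem_range] at hb
      exact ⟨⟨b, lt_of_lt_of_le hb h⟩, by simp [hb], rfl⟩
  rw [key, Finset.card_range]

lemma shadow_card_bound {S : Finset (Fin n)} {H : Finset (Finset (Fin n))}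
    (hH : ∀ e ∈ H, ∀ p, p ⊆ e → p.card = 2 → ¬ p ⊆ S) :
    (hShadow 2 H).card ≤ n.choose 2 - S.card.choose 2 := by
  have hsub : hShadow 2 H ⊆ Finset.univ.powersetCard 2 \ S.powersetCard 2 := by
    intro p hp
    obtain ⟨e, he, hpe⟩ := Finset.mem_biUnion.1 hp
    rw [Finset.mem_powersetCard] at hpe
    rw [Finset.mem_sdiff, Finset.mem_powersetCard]
    exact ⟨⟨Finset.subset_univ _, hpe.2⟩,
      fun hmem => hH e he p hpe.1 hpe.2 (Finset.mem_powersetCard.1 hmem).1⟩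
  calc (hShadow 2 H).card ≤ _ := Finset.card_le_card hsub
    _ = n.choose 2 - S.card.choose 2 := by
      rw [Finset.card_sdiff_of_subset (Finset.powersetCard_mono (Finset.subset_univ _)),
        Finset.card_powersetCard, Finset.card_powersetCard, Finset.card_fin]

lemma upper_bound (hn : 3 ≤ n) :
    Mcol n 2 3 2 2 (goodColoring n) ≤ n.choose 2 - (n / 2).choose 2 := by
  classical
  apply Finset.sup_le
  intro i _
  apply Finset.sup_le
  intro e _
  have hA₀ : (Finset.univ.filter (fun v : Fin n => (v : ℕ) < n - n / 2)).card
      = n - n / 2 := card_filter_val_lt (by omega)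
  have hB₀ : (Finset.univ.filter (fun v : Fin n => ¬ (v : ℕ) < n - n / 2)).card
      = n / 2 := by
    have h := Finset.card_filter_add_card_filter_not
      (s := (Finset.univ : Finset (Fin n))) (p := fun v : Fin n => (v : ℕ) < n - n / 2)
    rw [Finset.card_fin] at h
    omega
  have hmemcc : ∀ f ∈ tightComponent 2 (colorClass n 2 3 (goodColoring n) i) e,
      f.card = 3 ∧ goodColoring n f = i := by
    intro f hf
    rw [tightComponent, Finset.mem_filter] at hf
    exact mem_colorClass_iff.1 hf.1
  have fin2 : (i = 0) ∨ (i = 1) := by omega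
  rcases fin2 with rfl | rfl
  · -- red: triples with ≥ 2 vertices in A₀; shadow misses pairs inside B₀
    have hb := shadow_card_bound (n := n)
      (S := Finset.univ.filter (fun v : Fin n => ¬ (v : ℕ) < n - n / 2))
      (H := tightComponent 2 (colorClass n 2 3 (goodColoring n) 0) e) ?_
    · rw [hB₀] at hb
      exact hb
    · intro f hf p hpf hp2 hpS
      obtain ⟨hf3, hfc⟩ := hmemcc f hf
      have hge : 2 ≤ (f.filter (fun v : Fin n => (v : ℕ) < n - n / 2)).card := by
        by_contra hnot
        simp only [goodColoring] at hfc
        rw [if_neg hnot] at hfc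
        exact absurd hfc (by decide)
      have hple : p ⊆ f.filter (fun v : Fin n => ¬ (v : ℕ) < n - n / 2) := by
        intro v hv
        refine Finset.mem_filter.2 ⟨hpf hv, ?_⟩
        have := Finset.mem_filter.1 (hpS hv)
        exact this.2
      have h1 : (f.filter (fun v : Fin n => (v : ℕ) < n - n / 2)).card +
          (f.filter (fun v : Fin n => ¬ (v : ℕ) < n - n / 2)).card = 3 := by
        rw [Finset.card_filter_add_card_filter_not, hf3]
      have := Finset.card_le_card hple
      omega
  · -- blue: triples with ≤ 1 vertex in A₀; shadow misses pairs inside A₀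
    have hb := shadow_card_bound (n := n)
      (S := Finset.univ.filter (fun v : Fin n => (v : ℕ) < n - n / 2))
      (H := tightComponent 2 (colorClass n 2 3 (goodColoring n) 1) e) ?_
    · rw [hA₀] at hb
      refine le_trans hb (Nat.sub_le_sub_left (Nat.choose_le_choose 2 (by omega)) _)
    · intro f hf p hpf hp2 hpS
      obtain ⟨hf3, hfc⟩ := hmemcc f hf
      have hlt : ¬ 2 ≤ (f.filter (fun v : Fin n => (v : ℕ) < n - n / 2)).card := by
        intro hge
        simp only [goodColoring] at hfc
        rw [if_pos hge] at hfc
        exact absurd hfc (by decide)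
      have hple : p ⊆ f.filter (fun v : Fin n => (v : ℕ) < n - n / 2) := by
        intro v hv
        refine Finset.mem_filter.2 ⟨hpf hv, ?_⟩
        have := Finset.mem_filter.1 (hpS hv)
        exact this.2
      have := Finset.card_le_card hple
      omega

end Aux


/-- For every `n ≥ 3`, `M(n,2,3,2,2) = C(n,2) - C(⌊n/2⌋,2)`. -/
theorem statement8 (n : ℕ) (hn : 3 ≤ n) :
    Mmin n 2 3 2 2 = n.choose 2 - (n / 2).choose 2 := by
  have hlow := lower_bound hn
  have hup := upper_bound (n := n) hn
  have hmem : Mcol n 2 3 2 2 (goodColoring n) = n.choose 2 - (n / 2).choose 2 :=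
    le_antisymm hup (hlow _)
  refine le_antisymm (Nat.sInf_le ⟨goodColoring n, hmem⟩) ?_
  refine le_csInf ⟨_, goodColoring n, hmem⟩ ?_
  rintro m ⟨c, rfl⟩
  exact hlow c
end

section
/- Let n, n_0, r, k, t, s be positive integers such that n ≥ n_0 ≥ k ≥ max(s, t+1) and r ≥ 2. Then for any r-coloring c_0 of the edges of K^k_{n_0}, there is an r-coloring c of the edges of K^k_n such that M(n,r,k,t,s;c) ≤ Σ_{ℓ=1}^{s} ⌈n/(n_0−k+1)⌉^s · C(s−1, ℓ−1) · M(n_0,r,k,t,ℓ;c_0). -/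
open Finset

/-!
Split the vertices of `K^k_n` into `n₀ - k + 1` consecutive blocks of `q = ⌈n / (n₀ - k + 1)⌉`
vertices and let `φ` send a vertex to its block, viewed as one of the low vertices of `K^k_{n₀}`.
Color an edge `e` by `c₀` of `φ(e)` completed to a `k`-set with top vertices of `K^k_{n₀}`, which
`φ` never hits. Two `k`-sets sharing `t` vertices have completed images sharing `t` vertices, so
every monochromatic `t`-tight component is mapped into one of `c₀`, and each `s`-set of its shadow
is sent by `φ` onto an `ℓ`-set of the `ℓ`-shadow of that component. Finally, an `ℓ`-set of blocks
is the image of at most `q ^ s * C(s - 1, ℓ - 1)` sets of size `s`.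
-/

def jumps (g : ℕ → ℕ) (m : ℕ) : Finset ℕ :=
  (range m).filter fun j => g j ≠ g (j + 1)

section MonotoneSequences

variable {g g' : ℕ → ℕ} {m : ℕ}

lemma jumps_subset_range : jumps g m ⊆ range m := filter_subset _ _

lemma card_jumps_add_one (hg : MonotoneOn g (Set.Iic m)) :
    #(jumps g m) + 1 = #((range (m + 1)).image g) := by
  induction m with
  | zero => simp [jumps]
  | succ m ih =>
    have ih := ih (hg.mono (Set.Iic_subset_Iic.2 m.le_succ))
    rw [jumps, range_add_one, filter_insert, ← jumps, range_add_one (n := m + 1), image_insert]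
    by_cases h : g m = g (m + 1)
    · have hmem : g (m + 1) ∈ (range (m + 1)).image g := mem_image.2 ⟨m, by simp, h⟩
      rw [if_neg (not_not.2 h), insert_eq_of_mem hmem, ih]
    · have hstep : g m ≤ g (m + 1) := hg (by simp) (by simp) m.le_succ
      have hnotmem : g (m + 1) ∉ (range (m + 1)).image g := by
        rintro hmem
        obtain ⟨j, hj, hgj⟩ := mem_image.1 hmem
        rw [mem_range] at hj
        have : g j ≤ g m := hg (by simp; omega) (by simp) (by omega)
        omega
      rw [if_pos h, card_insert_of_notMem (fun hm => by simpa using jumps_subset_range hm),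
        card_insert_of_notMem hnotmem, ih]

lemma le_of_mem_image_range (hg : MonotoneOn g (Set.Iic m)) {y : ℕ}
    (hy : y ∈ (range (m + 1)).image g) : g 0 ≤ y := by
  obtain ⟨a, ha, rfl⟩ := mem_image.1 hy
  exact hg (by simp) (by simp at ha ⊢; omega) (Nat.zero_le a)

lemma succ_le_of_lt_of_mem_image_range (hg : MonotoneOn g (Set.Iic m)) {j y : ℕ}
    (hj : j < m) (hy : y ∈ (range (m + 1)).image g) (hlt : g j < y) : g (j + 1) ≤ y := by
  obtain ⟨a, ha, rfl⟩ := mem_image.1 hy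
  rw [mem_range] at ha
  have hja : j < a := by
    by_contra! haj
    exact (hg (by simp; omega) (by simp; omega) haj).not_gt hlt
  exact hg (by simp; omega) (by simp; omega) hja

lemma eqOn_of_image_eq_of_jumps_eq (hg : MonotoneOn g (Set.Iic m))
    (hg' : MonotoneOn g' (Set.Iic m)) (himage : (range (m + 1)).image g = (range (m + 1)).image g')
    (hjumps : jumps g m = jumps g' m) : ∀ j ≤ m, g j = g' j := by
  have hmem' : ∀ j ≤ m, g' j ∈ (range (m + 1)).image g := fun j hj =>
    himage ▸ mem_image_of_mem g' (mem_range.2 (by omega))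
  have hmem : ∀ j ≤ m, g j ∈ (range (m + 1)).image g' := fun j hj =>
    himage ▸ mem_image_of_mem g (mem_range.2 (by omega))
  intro j hj
  induction j with
  | zero =>
    exact le_antisymm (le_of_mem_image_range hg (hmem' 0 hj))
      (le_of_mem_image_range hg' (hmem 0 hj))
  | succ j ih =>
    have ih := ih (by omega)
    have hjump : g j ≠ g (j + 1) ↔ g' j ≠ g' (j + 1) := by
      simpa [jumps, show j < m by omega] using congrArg (j ∈ ·) hjumps
    have hle : g j ≤ g (j + 1) := hg (by simp; omega) (by simp; omega) j.le_succ
    have hle' : g' j ≤ g' (j + 1) := hg' (by simp; omega) (by simp; omega) j.le_succ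
    by_cases h : g j = g (j + 1)
    · have h' : g' j = g' (j + 1) := not_not.1 (mt hjump.2 (not_not.2 h))
      omega
    · have h' := hjump.1 h
      exact le_antisymm
        (succ_le_of_lt_of_mem_image_range hg (by omega) (hmem' _ hj) (by omega))
        (succ_le_of_lt_of_mem_image_range hg' (by omega) (hmem _ hj) (by omega))

end MonotoneSequences

namespace Finset

lemma finite_ofPred_mem (S : Finset ℕ) : (Set.ofPred (· ∈ S)).Finite := S.finite_toSet

lemma toFinset_finite_ofPred_mem (S : Finset ℕ) : (finite_ofPred_mem S).toFinset = S := by simp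

lemma strictMonoOn_nth_mem (S : Finset ℕ) : StrictMonoOn (Nat.nth (· ∈ S)) (Set.Iio #S) := by
  simpa only [toFinset_finite_ofPred_mem] using Nat.nth_strictMonoOn (finite_ofPred_mem S)

lemma image_nth_mem_range_card (S : Finset ℕ) : (range #S).image (Nat.nth (· ∈ S)) = S := by
  have h := Nat.image_nth_Iio_card (finite_ofPred_mem S)
  rw [toFinset_finite_ofPred_mem] at h
  rw [← coe_inj, coe_image, coe_range, h]
  rfl

end Finset

/-- An `s`-set `S` with `S.image (· / q) = T` is determined by the residues mod `q` of its
increasing enumeration together with the jumps of that enumeration divided by `q`, and those jumps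
form an `(#T - 1)`-subset of `range (s - 1)`. -/
lemma card_le_of_forall_image_div_eq {q s : ℕ} (hq : 0 < q) (hs : 0 < s) {T : Finset ℕ}
    {F : Finset (Finset ℕ)} (hF : ∀ S ∈ F, #S = s ∧ S.image (· / q) = T) :
    #F ≤ q ^ s * (s - 1).choose (#T - 1) := by
  obtain ⟨m, rfl⟩ : ∃ m, s = m + 1 := ⟨s - 1, by omega⟩
  set quot : Finset ℕ → ℕ → ℕ := fun S j => Nat.nth (· ∈ S) j / q
  have hmono : ∀ S ∈ F, MonotoneOn (quot S) (Set.Iic m) := fun S hS a ha b hb hab =>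
    Nat.div_le_div_right ((S.strictMonoOn_nth_mem).monotoneOn
      (by simp [(hF S hS).1] at ha ⊢; omega) (by simp [(hF S hS).1] at hb ⊢; omega) hab)
  have himage : ∀ S ∈ F, (range (m + 1)).image (quot S) = T := fun S hS =>
    calc (range (m + 1)).image (quot S) = (range #S).image ((· / q) ∘ Nat.nth (· ∈ S)) := by
          rw [(hF S hS).1]; rfl
      _ = T := by rw [← image_image, image_nth_mem_range_card, (hF S hS).2]
  let code : Finset ℕ → (Fin (m + 1) → Fin q) × Finset ℕ := fun S =>
    (fun i => ⟨Nat.nth (· ∈ S) i % q, Nat.mod_lt _ hq⟩, jumps (quot S) m)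
  calc #F ≤ #((univ : Finset (Fin (m + 1) → Fin q)) ×ˢ (range m).powersetCard (#T - 1)) := by
        refine card_le_card_of_injOn code (fun S hS => ?_) (fun S hS S' hS' hcode => ?_)
        · have hcard := card_jumps_add_one (hmono S hS)
          rw [himage S hS] at hcard
          rw [mem_coe, mem_product, mem_powersetCard]
          exact ⟨mem_univ _, jumps_subset_range, show #(jumps (quot S) m) = _ by omega⟩
        · have hquot := eqOn_of_image_eq_of_jumps_eq (hmono S hS) (hmono S' hS')
            ((himage S hS).trans (himage S' hS').symm) (congrArg Prod.snd hcode)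
          have hnth : ∀ j < m + 1, Nat.nth (· ∈ S) j = Nat.nth (· ∈ S') j := fun j hj => by
            have hmod := congrArg (fun f => (f ⟨j, hj⟩ : ℕ)) (congrArg Prod.fst hcode)
            rw [← Nat.div_add_mod (Nat.nth (· ∈ S) j) q, ← Nat.div_add_mod (Nat.nth (· ∈ S') j) q]
            exact congrArg₂ (q * · + ·) (hquot j (by omega)) hmod
          rw [← image_nth_mem_range_card S, ← image_nth_mem_range_card S', (hF S hS).1,
            (hF S' hS').1]
          exact image_congr fun j hj => hnth j (mem_range.1 hj)
    _ = q ^ (m + 1) * (m + 1 - 1).choose (#T - 1) := by simp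

lemma card_le_of_forall_image_eq_of_val_eq_div {n N q s : ℕ} (hq : 0 < q) (hs : 0 < s)
    {φ : Fin n → Fin N} (hφ : ∀ x, (φ x : ℕ) = x / q) {T : Finset (Fin N)}
    {F : Finset (Finset (Fin n))} (hF : ∀ S ∈ F, #S = s ∧ S.image φ = T) :
    #F ≤ q ^ s * (s - 1).choose (#T - 1) := by
  have hval : ∀ S : Finset (Fin n), (S.map Fin.valEmbedding).image (· / q) =
      (S.image φ).map Fin.valEmbedding := fun S => by
    ext y; simp [hφ]
  rw [← card_map (mapEmbedding Fin.valEmbedding).toEmbedding, ← card_map Fin.valEmbedding (s := T)]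
  refine card_le_of_forall_image_div_eq hq hs fun S' hS' => ?_
  obtain ⟨S, hS, rfl⟩ := mem_map.1 hS'
  simp only [RelEmbedding.coe_toEmbedding, mapEmbedding_apply, card_map, hval, (hF S hS).1,
    (hF S hS).2, and_self]

section Shadow

variable {α β : Type*} [DecidableEq α] [DecidableEq β]

lemma mem_hShadow {s : ℕ} {H : Finset (Finset α)} {S : Finset α} :
    S ∈ hShadow s H ↔ ∃ e ∈ H, S ⊆ e ∧ #S = s := by
  simp [hShadow]

lemma card_hShadow_le_sum_of_image_subset {φ : α → β} {C : Finset (Finset α)}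
    {C' : Finset (Finset β)} {s : ℕ} (hs : 0 < s) (N : ℕ → ℕ)
    (hC : ∀ f ∈ C, ∃ f' ∈ C', f.image φ ⊆ f')
    (hfib : ∀ T : Finset β, ∀ F : Finset (Finset α),
      (∀ S ∈ F, #S = s ∧ S.image φ = T) → #F ≤ N #T) :
    #(hShadow s C) ≤ ∑ ℓ ∈ Icc 1 s, N ℓ * #(hShadow ℓ C') := by
  have hsize : ∀ S ∈ hShadow s C, #(S.image φ) ∈ Icc 1 s := fun S hS => by
    obtain ⟨-, -, -, hS⟩ := mem_hShadow.1 hS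
    have hne : S.Nonempty := card_pos.1 (hS ▸ hs)
    exact mem_Icc.2 ⟨card_pos.2 (hne.image φ), hS ▸ card_image_le⟩
  rw [card_eq_sum_card_fiberwise hsize]
  refine sum_le_sum fun ℓ _ => card_le_mul_card_image_of_maps_to (f := (·.image φ))
    (fun S hS => ?_) _ fun T hT => ?_
  · obtain ⟨hS, hℓ⟩ := mem_filter.1 hS
    obtain ⟨f, hf, hSf, -⟩ := mem_hShadow.1 hS
    obtain ⟨f', hf', hff'⟩ := hC f hf
    exact mem_hShadow.2 ⟨f', hf', (image_subset_image hSf).trans hff', hℓ⟩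
  · obtain ⟨-, -, -, rfl⟩ := mem_hShadow.1 hT
    refine hfib T _ fun S hS => ?_
    obtain ⟨hS, rfl⟩ := mem_filter.1 hS
    obtain ⟨-, -, -, hcard⟩ := mem_hShadow.1 (mem_filter.1 hS).1
    exact ⟨hcard, rfl⟩

end Shadow

section TightComponents

variable {V W : Type*} [DecidableEq V] [DecidableEq W] {t : ℕ}

lemma mem_tightComponent {H : Finset (Finset V)} {e f : Finset V} :
    f ∈ tightComponent t H e ↔ f ∈ H ∧ TightConn t H e f := by
  classical
  rw [tightComponent, mem_filter]

lemma TightConn.map {H : Finset (Finset V)} {H' : Finset (Finset W)} {Φ : Finset V → Finset W}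
    (hstep : ∀ a b, TightStep t H a b → TightStep t H' (Φ a) (Φ b)) {a b : Finset V}
    (h : TightConn t H a b) : TightConn t H' (Φ a) (Φ b) :=
  Relation.ReflTransGen.lift Φ hstep a b h

lemma mem_tightComponent_map {H : Finset (Finset V)} {H' : Finset (Finset W)}
    {Φ : Finset V → Finset W} (hmem : ∀ a ∈ H, Φ a ∈ H')
    (hstep : ∀ a b, TightStep t H a b → TightStep t H' (Φ a) (Φ b)) {e f : Finset V}
    (hf : f ∈ tightComponent t H e) : Φ f ∈ tightComponent t H' (Φ e) := by
  rw [mem_tightComponent] at hf ⊢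
  exact ⟨hmem f hf.1, hf.2.map hstep⟩

end TightComponents

section Colorings

variable {n n₀ r k t s : ℕ}

lemma mem_colorClass {c : Finset (Fin n) → Fin r} {i : Fin r} {e : Finset (Fin n)} :
    e ∈ colorClass n r k c i ↔ #e = k ∧ c e = i := by
  simp [colorClass]

lemma Mcol_le_iff {c : Finset (Fin n) → Fin r} {m : ℕ} :
    Mcol n r k t s c ≤ m ↔ ∀ i, ∀ e ∈ colorClass n r k c i,
      #(hShadow s (tightComponent t (colorClass n r k c i) e)) ≤ m := by
  simp only [Mcol, Finset.sup_le_iff, mem_univ, true_imp_iff]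

lemma Mcol_comp_le_sum (hs : 0 < s) (c₀ : Finset (Fin n₀) → Fin r) {φ : Fin n → Fin n₀}
    {Φ : Finset (Fin n) → Finset (Fin n₀)} (N : ℕ → ℕ) (hcard : ∀ e, #e = k → #(Φ e) = k)
    (hinter : ∀ a b, #a = k → #b = k → t ≤ #(a ∩ b) → t ≤ #(Φ a ∩ Φ b))
    (hsub : ∀ e, e.image φ ⊆ Φ e)
    (hfib : ∀ T F, (∀ S ∈ F, #S = s ∧ S.image φ = T) → #F ≤ N #T) :
    Mcol n r k t s (c₀ ∘ Φ) ≤ ∑ ℓ ∈ Icc 1 s, N ℓ * Mcol n₀ r k t ℓ c₀ := by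
  rw [Mcol_le_iff]
  intro i e he
  have hclass : ∀ a ∈ colorClass n r k (c₀ ∘ Φ) i, Φ a ∈ colorClass n₀ r k c₀ i := by
    intro a ha
    rw [mem_colorClass] at ha ⊢
    exact ⟨hcard a ha.1, ha.2⟩
  have hstep : ∀ a b, TightStep t (colorClass n r k (c₀ ∘ Φ) i) a b →
      TightStep t (colorClass n₀ r k c₀ i) (Φ a) (Φ b) := fun a b ⟨ha, hb, hab⟩ =>
    ⟨hclass a ha, hclass b hb, hinter a b (mem_colorClass.1 ha).1 (mem_colorClass.1 hb).1 hab⟩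
  calc _ ≤ ∑ ℓ ∈ Icc 1 s, N ℓ *
        #(hShadow ℓ (tightComponent t (colorClass n₀ r k c₀ i) (Φ e))) :=
        card_hShadow_le_sum_of_image_subset hs N
          (fun f hf => ⟨Φ f, mem_tightComponent_map hclass hstep hf, hsub f⟩) hfib
    _ ≤ _ := sum_le_sum fun ℓ _ =>
        Nat.mul_le_mul_left _ (Mcol_le_iff.1 le_rfl i _ (hclass e he))

end Colorings

lemma Finset.card_image_add_card_inter_le {α β : Type*} [DecidableEq α] [DecidableEq β]
    (φ : α → β) (a b : Finset α) :
    #(a.image φ) + #(a ∩ b) ≤ #(a.image φ ∩ b.image φ) + #a := by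
  have hsplit : #(a.image φ) ≤ #((a \ b).image φ) + #((a ∩ b).image φ) :=
    calc #(a.image φ) = #((a \ b).image φ ∪ (a ∩ b).image φ) := by
          rw [← image_union, sdiff_union_inter]
      _ ≤ _ := card_union_le _ _
  have := card_image_le (s := a \ b) (f := φ)
  have := card_le_card (image_inter_subset φ a b)
  have := card_sdiff_add_card_inter a b
  omega

section Padding

variable {N k : ℕ}

def topVerts (N m : ℕ) : Finset (Fin N) := {v | N ≤ (v : ℕ) + m}

lemma mem_topVerts {m : ℕ} {v : Fin N} : v ∈ topVerts N m ↔ N ≤ (v : ℕ) + m := by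
  simp [topVerts]

lemma card_topVerts (m : ℕ) : #(topVerts N m) = min N m := by
  have h : topVerts N m = ({v | (v : ℕ) < m} : Finset (Fin N)).image Fin.rev := by
    ext v
    simp only [mem_topVerts, mem_image, mem_filter, mem_univ, true_and]
    constructor
    · exact fun hv => ⟨v.rev, by rw [Fin.val_rev]; omega, Fin.rev_rev v⟩
    · rintro ⟨w, hw, rfl⟩
      rw [Fin.val_rev]
      omega
  rw [h, card_image_of_injective _ Fin.rev_injective, Fin.card_filter_val_lt]

def padTop (k : ℕ) (A : Finset (Fin N)) : Finset (Fin N) := A ∪ topVerts N (k - #A)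

lemma disjoint_topVerts {A : Finset (Fin N)} (hA : ∀ v ∈ A, (v : ℕ) + k ≤ N) {m : ℕ}
    (hm : m ≤ k - #A) : Disjoint A (topVerts N m) := by
  refine disjoint_left.2 fun v hv hv' => ?_
  have := card_pos.2 ⟨v, hv⟩
  have := hA v hv
  rw [mem_topVerts] at hv'
  omega

lemma card_padTop (hkN : k ≤ N) {A : Finset (Fin N)} (hA : ∀ v ∈ A, (v : ℕ) + k ≤ N)
    (hAk : #A ≤ k) : #(padTop k A) = k := by
  rw [padTop, card_union_of_disjoint (disjoint_topVerts hA le_rfl), card_topVerts]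
  omega

lemma card_inter_add_min_le_card_padTop_inter (hkN : k ≤ N) {A B : Finset (Fin N)}
    (hA : ∀ v ∈ A, (v : ℕ) + k ≤ N) :
    #(A ∩ B) + min (k - #A) (k - #B) ≤ #(padTop k A ∩ padTop k B) := by
  have htop : ∀ {m m'}, m ≤ m' → topVerts N m ⊆ topVerts N m' := fun h v hv => by
    rw [mem_topVerts] at hv ⊢; omega
  have hsub : A ∩ B ∪ topVerts N (min (k - #A) (k - #B)) ⊆ padTop k A ∩ padTop k B :=
    union_subset (inter_subset_inter subset_union_left subset_union_left)
      (subset_inter (htop (min_le_left _ _) |>.trans subset_union_right)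
        (htop (min_le_right _ _) |>.trans subset_union_right))
  have hdisj : Disjoint (A ∩ B) (topVerts N (min (k - #A) (k - #B))) :=
    (disjoint_topVerts hA (min_le_left _ _)).mono_left inter_subset_left
  have := card_le_card hsub
  rw [card_union_of_disjoint hdisj, card_topVerts] at this
  omega

variable {α : Type*} {φ : α → Fin N}

lemma card_padTop_image (hkN : k ≤ N) (hφ : ∀ x, (φ x : ℕ) + k ≤ N) {e : Finset α}
    (he : #e = k) : #(padTop k (e.image φ)) = k :=
  card_padTop hkN (forall_mem_image.2 fun x _ => hφ x) (he ▸ card_image_le)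

lemma le_card_padTop_image_inter [DecidableEq α] (hkN : k ≤ N) (hφ : ∀ x, (φ x : ℕ) + k ≤ N) {t : ℕ}
    {a b : Finset α} (ha : #a = k) (hb : #b = k) (hab : t ≤ #(a ∩ b)) :
    t ≤ #(padTop k (a.image φ) ∩ padTop k (b.image φ)) := by
  have := card_inter_add_min_le_card_padTop_inter hkN (A := a.image φ) (B := b.image φ)
    (forall_mem_image.2 fun x _ => hφ x)
  have := card_image_add_card_inter_le φ a b
  have := card_image_add_card_inter_le φ b a
  rw [inter_comm b, inter_comm (b.image φ)] at this
  omega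

end Padding

theorem statement14_general (n n₀ r k t s : ℕ) (hs : 0 < s)
    (hmax : max s (t + 1) ≤ k) (hkn : k ≤ n₀) (hn : n₀ ≤ n)
    (c₀ : Finset (Fin n₀) → Fin r) :
    ∃ c : Finset (Fin n) → Fin r,
      Mcol n r k t s c ≤ ∑ ℓ ∈ Finset.Icc 1 s,
        ((n + (n₀ - k + 1) - 1) / (n₀ - k + 1)) ^ s * (s - 1).choose (ℓ - 1) *
          Mcol n₀ r k t ℓ c₀ := by
  set d := n₀ - k + 1
  set q := (n + d - 1) / d
  have hq : 0 < q := Nat.div_pos (by omega) (by omega)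
  have hnq : n ≤ q * d := by
    have := le_smul_ceilDiv (b := n) (show 0 < d by omega)
    rwa [smul_eq_mul, Nat.ceilDiv_eq_add_pred_div, mul_comm] at this
  let φ : Fin n → Fin n₀ := fun x => ⟨x / q, by
    have := Nat.div_lt_of_lt_mul (x.isLt.trans_le hnq); omega⟩
  have hφ : ∀ x, (φ x : ℕ) + k ≤ n₀ := fun x => by
    have := Nat.div_lt_of_lt_mul (x.isLt.trans_le hnq); simp only [φ]; omega
  exact ⟨c₀ ∘ fun e => padTop k (e.image φ), Mcol_comp_le_sum hs c₀ _
    (fun _ => card_padTop_image hkn hφ) (fun _ _ => le_card_padTop_image_inter hkn hφ)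
    (fun _ => subset_union_left)
    (fun _ _ => card_le_of_forall_image_eq_of_val_eq_div hq hs fun _ => rfl)⟩

/-- **Blow-up lemma.** Let `n ≥ n₀ ≥ k ≥ max s (t+1)` and `r ≥ 2`. Then for any
`r`-coloring `c₀` of `K^k_{n₀}` there is an `r`-coloring `c` of `K^k_n` with
`M(n,r,k,t,s;c) ≤ Σ_{ℓ=1}^s ⌈n/(n₀-k+1)⌉^s C(s-1,ℓ-1) M(n₀,r,k,t,ℓ;c₀)`. -/
theorem statement14 (n n₀ r k t s : ℕ) (hr : 2 ≤ r) (ht : 0 < t) (hs : 0 < s)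
    (hmax : max s (t + 1) ≤ k) (hkn : k ≤ n₀) (hn : n₀ ≤ n)
    (c₀ : Finset (Fin n₀) → Fin r) :
    ∃ c : Finset (Fin n) → Fin r,
      Mcol n r k t s c ≤ ∑ ℓ ∈ Finset.Icc 1 s,
        ((n + (n₀ - k + 1) - 1) / (n₀ - k + 1)) ^ s * (s - 1).choose (ℓ - 1) *
          Mcol n₀ r k t ℓ c₀ :=
  statement14_general n n₀ r k t s hs hmax hkn hn c₀
end
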